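/- arXiv:2504.01829 — 6 statements merged into one kernel-verified Lean document; each statement's English description precedes it below -/
import Mathlib

section
/- Let Ω be finite, A a finite menu, and suppose sender preferences u: A × Ω → ℝ and receiver preferences v: A × Ω → ℝ are given, with tie-breaking in the sender's favor. Then there exists an optimal Bayesian persuasion signal (a Bayes-plausible distribution over action–posterior recommendation pairs satisfying receiver obedience) whose support is contained in the set {(a,p) : a ∈ A, p an extreme point of C_{A,a}}. -/
/-!
Each region `C a` is a polyhedron inside the simplex, hence a polytope: it has finitely many
extreme points and, by Krein–Milman, is their convex hull. Send a signal `π` to its moment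
`∑ π (a, p) • (p, U a p)` in `(Ω → ℝ) × ℝ`, where `U a p` is the sender's expected utility. Since
`p ↦ (p, U a p)` is affine, the moment of every signal lies in the convex hull of the finitely many
points `(e, U a e)` with `e` extreme in `C a`, and every point of this hull is the moment of a
signal supported on such pairs `(a, e)`. The hull is compact, so the value coordinate attains its
maximum on the slice where the posterior mean is `p0`.
-/

open Finset Filter Topology

section Polyhedron

variable {E G ι : Type*} [AddCommGroup E] [Module ℝ E] [AddCommGroup G] [Module ℝ G]

def polyhedron (f : ι → E →ₗ[ℝ] ℝ) (c : ι → ℝ) (g : E →ₗ[ℝ] G) (d : G) : Set E :=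
  {x | (∀ i, c i ≤ f i x) ∧ g x = d}

variable (f : ι → E →ₗ[ℝ] ℝ) (c : ι → ℝ) (g : E →ₗ[ℝ] G) (d : G)

theorem convex_polyhedron : Convex ℝ (polyhedron f c g d) := by
  have : polyhedron f c g d = (⋂ i, {x | c i ≤ f i x}) ∩ g ⁻¹' {d} := by
    ext x; simp [polyhedron]
  rw [this]
  exact (convex_iInter fun i => convex_halfSpace_ge (f i).isLinear (c i)).inter
    ((convex_singleton d).linear_preimage g)

theorem isClosed_polyhedron [TopologicalSpace E] [IsTopologicalAddGroup E] [ContinuousSMul ℝ E]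
    [T2Space E] [FiniteDimensional ℝ E] [TopologicalSpace G] [IsTopologicalAddGroup G]
    [ContinuousSMul ℝ G] [T2Space G] : IsClosed (polyhedron f c g d) := by
  have : polyhedron f c g d = (⋂ i, {x | c i ≤ f i x}) ∩ g ⁻¹' {d} := by
    ext x; simp [polyhedron]
  rw [this]
  exact (isClosed_iInter fun i => isClosed_le continuous_const
    (f i).continuous_of_finiteDimensional).inter
    (isClosed_singleton.preimage g.continuous_of_finiteDimensional)

/-- An extreme point is determined by its set of active constraints: if `y` has the same active
constraints as `x`, then `x + t • (x - y)` stays in the polyhedron for small `t > 0`, which puts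
`x` inside an open segment starting at `y`. -/
theorem finite_extremePoints_polyhedron [Finite ι] :
    (Set.extremePoints ℝ (polyhedron f c g d)).Finite := by
  refine Set.Finite.of_finite_image (f := fun x => {i | f i x = c i}) (Set.toFinite _) ?_
  intro x hx y hy hxy
  have hactive : ∀ i, f i x = c i → f i y = c i := fun i => (Set.ext_iff.1 hxy i).1
  have hslack : ∀ᶠ t in 𝓝 (0 : ℝ), ∀ i, c i < f i x → c i < f i x + t * (f i x - f i y) :=
    eventually_all.2 fun i => eventually_imp_distrib_left.2 fun hi =>
      ((continuous_const.add (continuous_id.mul continuous_const)).tendsto' 0 (f i x)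
        (by simp)).eventually_const_lt hi
  obtain ⟨t, hslack_t, ht⟩ := ((hslack.filter_mono nhdsWithin_le_nhds).and
    (self_mem_nhdsWithin (s := Set.Ioi 0))).exists
  have hmem : x + t • (x - y) ∈ polyhedron f c g d := by
    refine ⟨fun i => ?_, by simp [hx.1.2, hy.1.2]⟩
    simp only [map_add, map_smul, map_sub, smul_eq_mul]
    rcases (hx.1.1 i).eq_or_lt with hi | hi
    · rw [← hi, hactive i hi.symm, sub_self, mul_zero, add_zero]
    · exact (hslack_t i hi).le
  have ht' : (0 : ℝ) < 1 + t := by linarith [show (0 : ℝ) < t from ht]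
  refine (hx.2 hy.1 hmem ⟨t / (1 + t), 1 / (1 + t), by positivity, by positivity, ?_, ?_⟩).symm
  · field_simp
    ring
  · calc (t / (1 + t)) • y + (1 / (1 + t)) • (x + t • (x - y)) = (1 + t)⁻¹ • ((1 + t) • x) := by
          module
      _ = x := inv_smul_smul₀ ht'.ne' x

end Polyhedron

theorem convexHull_extremePoints_of_finite {E : Type*} [AddCommGroup E] [Module ℝ E]
    [TopologicalSpace E] [T2Space E] [IsTopologicalAddGroup E] [ContinuousSMul ℝ E]
    [LocallyConvexSpace ℝ E] {s : Set E} (hcomp : IsCompact s) (hconv : Convex ℝ s)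
    (hfin : (s.extremePoints ℝ).Finite) : convexHull ℝ (s.extremePoints ℝ) = s := by
  rw [← (hfin.isClosed_convexHull ℝ).closure_eq, closure_convexHull_extremePoints hcomp hconv]

section FinitelySupported

variable {X F : Type*} [AddCommGroup F] [Module ℝ F]

theorem Finsupp.sum_support_smul_finsetSum_single {ι M : Type*} [AddCommMonoid M] [Module ℝ M]
    (t : Finset ι) (x : ι → X) (w : ι → ℝ) (m : X → M) :
    ∑ y ∈ (∑ i ∈ t, single (x i) (w i)).support, (∑ i ∈ t, single (x i) (w i)) y • m y =
      ∑ i ∈ t, w i • m (x i) := by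
  have h := map_sum (linearCombination ℝ m) (fun i => single (x i) (w i)) t
  simp only [linearCombination_single] at h
  rwa [linearCombination_apply, Finsupp.sum] at h

theorem mem_convexHull_image_iff_exists_finsupp (φ : X → F) (s : Set X) (z : F) :
    z ∈ convexHull ℝ (φ '' s) ↔ ∃ μ : X →₀ ℝ, (∀ x, 0 ≤ μ x) ∧ ↑μ.support ⊆ s ∧
      ∑ x ∈ μ.support, μ x = 1 ∧ ∑ x ∈ μ.support, μ x • φ x = z := by
  constructor
  · rw [mem_convexHull_iff_exists_fintype]
    rintro ⟨ι, _, w, q, hw0, hw1, hq, rfl⟩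
    classical
    choose x hxs hxq using hq
    refine ⟨∑ i, Finsupp.single (x i) (w i), fun y => ?_, fun y hy => ?_, ?_, ?_⟩
    · rw [Finsupp.finsetSum_apply]
      exact sum_nonneg fun i _ => by
        rw [Finsupp.single_apply]; split_ifs <;> simp [hw0]
    · obtain ⟨i, -, hi⟩ := mem_biUnion.1 (Finsupp.support_finsetSum hy)
      rw [Finsupp.support_single_subset hi |> mem_singleton.1]
      exact hxs i
    · simpa [hw1] using Finsupp.sum_support_smul_finsetSum_single univ x w (fun _ => (1 : ℝ))
    · simpa [hxq] using Finsupp.sum_support_smul_finsetSum_single univ x w φ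
  · rintro ⟨μ, hμ0, hμs, hμ1, rfl⟩
    rw [← centerMass_eq_of_sum_1 _ _ hμ1]
    exact centerMass_mem_convexHull _ (fun x _ => hμ0 x) (by simp [hμ1])
      fun x hx => Set.mem_image_of_mem φ (hμs hx)

end FinitelySupported

section Fibered

variable {A E F : Type*} [AddCommGroup E] [Module ℝ E] [AddCommGroup F] [Module ℝ F]
  (ψ : A → E →ᵃ[ℝ] F) (S : A → Set E)

theorem mem_convexHull_image_of_mem_convexHull_fiber {a : A} {p : E}
    (hp : p ∈ convexHull ℝ (S a)) :
    ψ a p ∈ convexHull ℝ ((fun x : A × E => ψ x.1 x.2) '' {x | x.2 ∈ S x.1}) := by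
  have : ψ a p ∈ convexHull ℝ (ψ a '' S a) :=
    (ψ a).image_convexHull (S a) ▸ Set.mem_image_of_mem (ψ a) hp
  refine convexHull_mono ?_ this
  rintro _ ⟨e, he, rfl⟩
  exact ⟨(a, e), he, rfl⟩

theorem sum_smul_mem_convexHull_image_of_mem_convexHull_fiber (π : (A × E) →₀ ℝ)
    (h0 : ∀ x, 0 ≤ π x) (h1 : ∑ x ∈ π.support, π x = 1)
    (hπ : ∀ x ∈ π.support, x.2 ∈ convexHull ℝ (S x.1)) :
    ∑ x ∈ π.support, π x • ψ x.1 x.2 ∈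
      convexHull ℝ ((fun x : A × E => ψ x.1 x.2) '' {x | x.2 ∈ S x.1}) := by
  refine convexHull_min ?_ (convex_convexHull ℝ _)
    ((mem_convexHull_image_iff_exists_finsupp (fun x : A × E => ψ x.1 x.2) ↑π.support
      (∑ x ∈ π.support, π x • ψ x.1 x.2)).2 ⟨π, h0, subset_rfl, h1, rfl⟩)
  rintro _ ⟨x, hx, rfl⟩
  exact mem_convexHull_image_of_mem_convexHull_fiber ψ S (hπ x hx)

end Fibered

theorem Set.Finite.setOf_snd_mem {A E : Type*} [Finite A] {S : A → Set E}
    (hS : ∀ a, (S a).Finite) : {x : A × E | x.2 ∈ S x.1}.Finite :=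
  (Set.finite_univ.prod (Set.finite_iUnion hS)).subset
    fun x hx => ⟨trivial, Set.mem_iUnion.2 ⟨x.1, hx⟩⟩

section OptimalRegion

variable {Ω A : Type*} [Fintype Ω] (v : A → Ω → ℝ) (a : A)

def optimalRegion : Set (Ω → ℝ) :=
  {q | q ∈ stdSimplex ℝ Ω ∧ ∀ b, ∑ ω, v b ω * q ω ≤ ∑ ω, v a ω * q ω}

open Matrix in
theorem optimalRegion_eq_polyhedron : optimalRegion v a = polyhedron
    (Sum.elim (fun ω => LinearMap.proj ω) fun b => dotProductBilin ℝ ℝ (v a - v b)) 0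
    (dotProductBilin ℝ ℝ 1) 1 := by
  ext q
  simp only [optimalRegion, polyhedron, stdSimplex, Set.mem_ofPred_eq, Sum.forall,
    Sum.elim_inl, Sum.elim_inr, LinearMap.proj_apply, dotProductBilin_apply_apply,
    sub_dotProduct, sub_nonneg, one_dotProduct, Pi.zero_apply]
  tauto

variable [Finite A]

theorem finite_extremePoints_optimalRegion : ((optimalRegion v a).extremePoints ℝ).Finite :=
  optimalRegion_eq_polyhedron v a ▸ finite_extremePoints_polyhedron ..

theorem convexHull_extremePoints_optimalRegion :
    convexHull ℝ ((optimalRegion v a).extremePoints ℝ) = optimalRegion v a := by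
  refine convexHull_extremePoints_of_finite ?_
    (optimalRegion_eq_polyhedron v a ▸ convex_polyhedron ..)
    (finite_extremePoints_optimalRegion v a)
  exact (isCompact_stdSimplex ℝ Ω).of_isClosed_subset
    (optimalRegion_eq_polyhedron v a ▸ isClosed_polyhedron ..) fun q hq => hq.1

end OptimalRegion

/-- There exists an optimal Bayesian persuasion signal supported on pairs
`(a, p)` with `p` an extreme point of the region `C_{A,a}` where `a` is
receiver-optimal. -/
theorem stmt_3 {Ω A : Type} [Fintype Ω] [Fintype A] [Nonempty A]
    (p0 : Ω → ℝ) (hp0 : p0 ∈ stdSimplex ℝ Ω)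
    (u v : A → Ω → ℝ)
    (C : A → Set (Ω → ℝ))
    (hC : ∀ a, C a = {q : Ω → ℝ | q ∈ stdSimplex ℝ Ω ∧
        ∀ b : A, ∑ ω, v b ω * q ω ≤ ∑ ω, v a ω * q ω})
    (IsSignal : ((A × (Ω → ℝ)) →₀ ℝ) → Prop)
    (hSig : ∀ π : (A × (Ω → ℝ)) →₀ ℝ, IsSignal π ↔
      ((∀ x, 0 ≤ π x) ∧ (∑ x ∈ π.support, π x = 1) ∧
       (∀ ω, ∑ x ∈ π.support, π x * x.2 ω = p0 ω) ∧
       (∀ x ∈ π.support, x.2 ∈ C x.1)))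
    (val : ((A × (Ω → ℝ)) →₀ ℝ) → ℝ)
    (hval : ∀ π : (A × (Ω → ℝ)) →₀ ℝ,
      val π = ∑ x ∈ π.support, π x * ∑ ω, u x.1 ω * x.2 ω) :
    ∃ π : (A × (Ω → ℝ)) →₀ ℝ, IsSignal π ∧
      (∀ π', IsSignal π' → val π' ≤ val π) ∧
      ∀ x ∈ π.support, x.2 ∈ Set.extremePoints ℝ (C x.1) := by
  obtain rfl : C = optimalRegion v := funext hC
  set vertices : A → Set (Ω → ℝ) := fun a => (optimalRegion v a).extremePoints ℝ
  have hhull : ∀ a, optimalRegion v a = convexHull ℝ (vertices a) :=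
    fun a => (convexHull_extremePoints_optimalRegion v a).symm
  set ψ : A → (Ω → ℝ) →ᵃ[ℝ] (Ω → ℝ) × ℝ :=
    fun a => (LinearMap.id.prod (dotProductBilin ℝ ℝ (u a))).toAffineMap
  set K := convexHull ℝ ((fun x : A × (Ω → ℝ) => ψ x.1 x.2) '' {x | x.2 ∈ vertices x.1})
  have hmoment : ∀ π : (A × (Ω → ℝ)) →₀ ℝ,
      ∑ x ∈ π.support, π x • ψ x.1 x.2 = (fun ω => ∑ x ∈ π.support, π x * x.2 ω, val π) := by
    intro π
    ext
    · simp [ψ, Prod.fst_sum, Finset.sum_apply]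
    · simp [ψ, Prod.snd_sum, hval, dotProduct]
  have hsignal_mem : ∀ π, IsSignal π → (p0, val π) ∈ K := by
    intro π hπ
    obtain ⟨h0, h1, hmean, hobed⟩ := (hSig π).1 hπ
    have := sum_smul_mem_convexHull_image_of_mem_convexHull_fiber ψ vertices π h0 h1
      fun x hx => hhull x.1 ▸ hobed x hx
    rwa [hmoment, funext hmean] at this
  obtain ⟨a₀, ha₀⟩ := Finite.exists_max fun a => ∑ ω, v a ω * p0 ω
  have hne : ψ a₀ p0 ∈ K ∩ {z | z.1 = p0} :=
    ⟨mem_convexHull_image_of_mem_convexHull_fiber ψ vertices (hhull a₀ ▸ ⟨hp0, ha₀⟩), rfl⟩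
  have hK : IsCompact (K ∩ {z | z.1 = p0}) := by
    refine IsCompact.inter_right ?_ (isClosed_eq continuous_fst continuous_const)
    exact ((Set.Finite.setOf_snd_mem fun a => finite_extremePoints_optimalRegion v a).image
      _).isCompact_convexHull ℝ
  obtain ⟨z, ⟨hzK, hz0⟩, hzmax⟩ := hK.exists_isMaxOn ⟨_, hne⟩ continuous_snd.continuousOn
  obtain ⟨μ, hμ0, hμG, hμ1, rfl⟩ := (mem_convexHull_image_iff_exists_finsupp _ _ _).1 hzK
  rw [hmoment] at hz0 hzmax
  exact ⟨μ, (hSig μ).2 ⟨hμ0, hμ1, congrFun hz0, fun x hx => (hμG hx).1⟩,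
    fun π hπ => hzmax ⟨hsignal_mem π hπ, rfl⟩, fun x hx => hμG hx⟩
end

section
/- Let Ω be finite with prior p0 of full support, A finite, u,v: A × Ω → ℝ. A Bayes-plausible obedient signal π over action–posterior pairs is optimal for the sender if and only if there exists a vector λ ∈ ℝ^{|Ω|} such that (i) for every (a,p) in the support of π, λ·p = Σ_ω u(a,ω)p(ω), and (ii) for every p ∈ Δ(Ω), λ·p ≥ Σ_ω u(a*(p),ω)p(ω), where a*(p) is the receiver-optimal action at p (ties broken in the sender's favor). -/
/-!
Sufficiency is weak duality: if `λ ⬝ᵥ p` dominates the sender's payoff at every obedient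
action–posterior pair, then every signal is worth at most `λ ⬝ᵥ p0`, with equality exactly when
`λ` touches the payoff on the signal's support.

For necessity, drop the normalisation of signals and extend everything homogeneously to the
positive orthant. Unnormalised obedient signals form a convex cone, and the pairs
(barycenter, payoff) they generate, pushed down in the payoff coordinate, form a convex cone `H`
in `(Ω → ℝ) × ℝ`; unlike its slice over the simplex, `H` has nonempty interior. Optimality of `π`
puts `(p0, val π)` on the boundary of `H`, so `H` has a supporting hyperplane there. It passes
through the origin because `H` is a cone, and it is not vertical because `p0` has full support;
normalising its payoff coefficient gives `λ`.
-/

open Finset Topology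

theorem LinearMap.apply_eq_dotProduct_add_mul {ι R : Type*} [Fintype ι] [DecidableEq ι]
    [CommSemiring R] (f : (ι → R) × R →ₗ[R] R) (q : (ι → R) × R) :
    f q = (fun i => f (Pi.single i 1, 0)) ⬝ᵥ q.1 + f (0, 1) * q.2 := by
  have hq : q = ∑ i, q.1 i • ((Pi.single i 1 : ι → R), (0 : R)) + q.2 • ((0 : ι → R), (1 : R)) := by
    ext <;> simp [Prod.fst_sum, Prod.snd_sum, Finset.sum_apply, Pi.single_apply]
  conv_lhs => rw [hq, map_add, map_sum]
  simp only [map_smul, smul_eq_mul, dotProduct, mul_comm]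

theorem PointedCone.map_eq_zero_of_forall_le {E : Type*} [AddCommGroup E] [Module ℝ E]
    (C : PointedCone ℝ E) (f : E →ₗ[ℝ] ℝ) {x : E} (hx : x ∈ C) (hf : ∀ a ∈ C, f a ≤ f x) :
    f x = 0 := by
  have h2 := hf _ (C.smul_mem zero_le_two hx)
  have h0 := hf 0 C.zero_mem
  rw [map_smul, smul_eq_mul] at h2
  rw [map_zero] at h0
  linarith

theorem eq_zero_of_nonpos_of_dotProduct_eq_zero {ι : Type*} [Fintype ι] {g p : ι → ℝ}
    (hg : ∀ i, g i ≤ 0) (hp : ∀ i, 0 < p i) (h : g ⬝ᵥ p = 0) : g = 0 := by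
  funext i
  have := (Finset.sum_eq_zero_iff_of_nonpos fun j _ =>
    mul_nonpos_of_nonpos_of_nonneg (hg j) (hp j).le).1 h i (mem_univ i)
  exact (mul_eq_zero.1 this).resolve_right (hp i).ne'

namespace BayesianPersuasion

variable {Ω A : Type*}

noncomputable def barycenter : ((A × (Ω → ℝ)) →₀ ℝ) →ₗ[ℝ] Ω → ℝ :=
  Finsupp.linearCombination ℝ Prod.snd

theorem barycenter_apply (μ : (A × (Ω → ℝ)) →₀ ℝ) (ω : Ω) :
    barycenter μ ω = ∑ x ∈ μ.support, μ x * x.2 ω := by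
  simp [barycenter, Finsupp.linearCombination_apply, Finsupp.sum, Finset.sum_apply]

theorem barycenter_single (x : A × (Ω → ℝ)) (c : ℝ) :
    barycenter (Finsupp.single x c) = c • x.2 :=
  Finsupp.linearCombination_single ℝ c x

variable [Fintype Ω]

def IsObedient (v : A → Ω → ℝ) (x : A × (Ω → ℝ)) : Prop :=
  x.2 ∈ stdSimplex ℝ Ω ∧ ∀ b, v b ⬝ᵥ x.2 ≤ v x.1 ⬝ᵥ x.2

def obedientCone (v : A → Ω → ℝ) : PointedCone ℝ ((A × (Ω → ℝ)) →₀ ℝ) where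
  carrier := {μ | (∀ x, 0 ≤ μ x) ∧ ∀ x ∈ μ.support, IsObedient v x}
  add_mem' {μ ν} hμ hν := by
    classical
    refine ⟨fun x => add_nonneg (hμ.1 x) (hν.1 x), fun x hx => ?_⟩
    rcases Finset.mem_union.1 (Finsupp.support_add hx) with h | h
    exacts [hμ.2 x h, hν.2 x h]
  zero_mem' := ⟨fun _ => le_rfl, by simp⟩
  smul_mem' c μ hμ :=
    ⟨fun x => mul_nonneg c.2 (hμ.1 x), fun x hx => hμ.2 x (Finsupp.support_smul hx)⟩

noncomputable def payoff (u : A → Ω → ℝ) : ((A × (Ω → ℝ)) →₀ ℝ) →ₗ[ℝ] ℝ :=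
  Finsupp.linearCombination ℝ fun x => u x.1 ⬝ᵥ x.2

variable {u v : A → Ω → ℝ} {μ : (A × (Ω → ℝ)) →₀ ℝ} {lam : Ω → ℝ}

theorem single_mem_obedientCone {x : A × (Ω → ℝ)} {c : ℝ} (hx : IsObedient v x) (hc : 0 ≤ c) :
    Finsupp.single x c ∈ obedientCone v := by
  classical
  refine ⟨fun y => ?_, fun y hy => ?_⟩
  · rw [Finsupp.single_apply]; split_ifs <;> simp [hc]
  · rwa [Finset.mem_singleton.1 (Finsupp.support_single_subset hy)]

theorem payoff_apply (μ : (A × (Ω → ℝ)) →₀ ℝ) :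
    payoff u μ = ∑ x ∈ μ.support, μ x * u x.1 ⬝ᵥ x.2 := by
  simp [payoff, Finsupp.linearCombination_apply, Finsupp.sum]

theorem payoff_single (x : A × (Ω → ℝ)) (c : ℝ) :
    payoff u (Finsupp.single x c) = c * u x.1 ⬝ᵥ x.2 :=
  Finsupp.linearCombination_single ℝ c x

theorem dotProduct_barycenter (lam : Ω → ℝ) (μ : (A × (Ω → ℝ)) →₀ ℝ) :
    lam ⬝ᵥ barycenter μ = ∑ x ∈ μ.support, μ x * lam ⬝ᵥ x.2 := by
  simp [barycenter, Finsupp.linearCombination_apply, Finsupp.sum, dotProduct_sum,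
    dotProduct_smul]

theorem sum_barycenter (hμ : μ ∈ obedientCone v) :
    ∑ ω, barycenter μ ω = ∑ x ∈ μ.support, μ x := by
  rw [← one_dotProduct (barycenter μ), dotProduct_barycenter]
  refine Finset.sum_congr rfl fun x hx => ?_
  rw [one_dotProduct, (hμ.2 x hx).1.2, mul_one]

def IsObedientSignal (v : A → Ω → ℝ) (p0 : Ω → ℝ) (μ : (A × (Ω → ℝ)) →₀ ℝ) : Prop :=
  (∀ x, 0 ≤ μ x) ∧ (∑ x ∈ μ.support, μ x = 1) ∧
    (∀ ω, ∑ x ∈ μ.support, μ x * x.2 ω = p0 ω) ∧ ∀ x ∈ μ.support, IsObedient v x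

theorem isObedientSignal_iff {p0 : Ω → ℝ} (hp0 : ∑ ω, p0 ω = 1) :
    IsObedientSignal v p0 μ ↔ μ ∈ obedientCone v ∧ barycenter μ = p0 := by
  simp only [IsObedientSignal, ← barycenter_apply, ← funext_iff]
  constructor
  · rintro ⟨h0, -, hbar, hob⟩
    exact ⟨⟨h0, hob⟩, hbar⟩
  · rintro ⟨hμ, hbar⟩
    exact ⟨hμ.1, by rw [← sum_barycenter hμ, hbar, hp0], hbar, hμ.2⟩

def Majorizes (lam : Ω → ℝ) (u v : A → Ω → ℝ) : Prop :=
  ∀ x, IsObedient v x → u x.1 ⬝ᵥ x.2 ≤ lam ⬝ᵥ x.2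

theorem payoff_le_dotProduct_barycenter (hlam : Majorizes lam u v) (hμ : μ ∈ obedientCone v) :
    payoff u μ ≤ lam ⬝ᵥ barycenter μ := by
  rw [payoff_apply, dotProduct_barycenter]
  exact Finset.sum_le_sum fun x hx => mul_le_mul_of_nonneg_left (hlam x (hμ.2 x hx)) (hμ.1 x)

theorem payoff_eq_dotProduct_barycenter_iff (hlam : Majorizes lam u v)
    (hμ : μ ∈ obedientCone v) :
    payoff u μ = lam ⬝ᵥ barycenter μ ↔ ∀ x ∈ μ.support, lam ⬝ᵥ x.2 = u x.1 ⬝ᵥ x.2 := by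
  rw [payoff_apply, dotProduct_barycenter, Finset.sum_eq_sum_iff_of_le fun x hx =>
    mul_le_mul_of_nonneg_left (hlam x (hμ.2 x hx)) (hμ.1 x)]
  refine forall₂_congr fun x hx => ?_
  rw [mul_right_inj' (Finsupp.mem_support_iff.1 hx), eq_comm]

/-- The hypograph of the concavification of the sender's indirect utility, extended
homogeneously from the simplex to the positive orthant. -/
def payoffHypograph (u v : A → Ω → ℝ) : PointedCone ℝ ((Ω → ℝ) × ℝ) where
  carrier := {q | ∃ μ ∈ obedientCone v, barycenter μ = q.1 ∧ q.2 ≤ payoff u μ}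
  add_mem' := by
    rintro q r ⟨μ, hμ, hμq, hμq'⟩ ⟨ν, hν, hνr, hνr'⟩
    refine ⟨μ + ν, add_mem hμ hν, by simp [hμq, hνr], ?_⟩
    simp only [Prod.snd_add, map_add]
    exact add_le_add hμq' hνr'
  zero_mem' := ⟨0, zero_mem _, by simp, by simp⟩
  smul_mem' := by
    rintro c q ⟨μ, hμ, hμq, hμq'⟩
    refine ⟨(c : ℝ) • μ, (obedientCone v).smul_mem c.2 hμ, by simp [hμq], ?_⟩
    show (c : ℝ) * q.2 ≤ payoff u ((c : ℝ) • μ)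
    rw [map_smul, smul_eq_mul]
    exact mul_le_mul_of_nonneg_left hμq' c.2

theorem mk_mem_payoffHypograph (hμ : μ ∈ obedientCone v) :
    (barycenter μ, payoff u μ) ∈ payoffHypograph u v :=
  ⟨μ, hμ, rfl, le_rfl⟩

theorem mk_mem_payoffHypograph_of_le {p : Ω → ℝ} {s t : ℝ}
    (h : (p, t) ∈ payoffHypograph u v) (hst : s ≤ t) : (p, s) ∈ payoffHypograph u v := by
  obtain ⟨μ, hμ, hp, ht⟩ := h
  exact ⟨μ, hμ, hp, hst.trans ht⟩

theorem exists_dotProduct_mem_payoffHypograph [Finite A] [Nonempty A] :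
    ∃ w : Ω → ℝ, ∀ p, 0 ≤ p → (p, w ⬝ᵥ p) ∈ payoffHypograph u v := by
  classical
  choose a ha using fun ω => Finite.exists_max fun b => v b ω
  have hvertex : ∀ ω, IsObedient v (a ω, Pi.single ω 1) := fun ω =>
    ⟨single_mem_stdSimplex ℝ ω, fun b => by simpa [dotProduct_single] using ha ω b⟩
  refine ⟨fun ω => u (a ω) ω, fun p hp => ?_⟩
  convert mk_mem_payoffHypograph (u := u)
    (sum_mem fun ω _ => single_mem_obedientCone (hvertex ω) (hp ω)) using 2
  · simp only [map_sum, barycenter_single]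
    exact pi_eq_sum_univ' p
  · simp only [map_sum, payoff_single, dotProduct_single, mul_one]
    exact Finset.sum_congr rfl fun ω _ => mul_comm _ _

theorem interior_payoffHypograph_nonempty [Finite A] [Nonempty A] :
    (interior (payoffHypograph u v : Set ((Ω → ℝ) × ℝ))).Nonempty := by
  obtain ⟨w, hw⟩ := exists_dotProduct_mem_payoffHypograph (u := u) (v := v)
  have hopen : IsOpen ((⋂ ω, {q : (Ω → ℝ) × ℝ | 0 < q.1 ω}) ∩ {q | q.2 < w ⬝ᵥ q.1}) :=
    (isOpen_iInter_of_finite fun ω =>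
      isOpen_lt continuous_const ((continuous_apply ω).comp continuous_fst)).inter
      (isOpen_lt continuous_snd (continuous_const.dotProduct continuous_fst))
  refine ⟨(1, w ⬝ᵥ 1 - 1), interior_maximal (fun q hq => ?_) hopen
    ⟨Set.mem_iInter.2 fun _ => show (0 : ℝ) < 1 from one_pos, by simp⟩⟩
  exact mk_mem_payoffHypograph_of_le (hw q.1 fun ω => (Set.mem_iInter.1 hq.1 ω).le) hq.2.le

theorem mk_notMem_interior_payoffHypograph {p0 : Ω → ℝ} {V : ℝ}
    (hV : V ∈ upperBounds (payoff u '' {μ ∈ obedientCone v | barycenter μ = p0})) :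
    (p0, V) ∉ interior (payoffHypograph u v : Set ((Ω → ℝ) × ℝ)) := by
  intro h
  have hnhds : ∀ᶠ t in 𝓝 V, (p0, t) ∈ interior (payoffHypograph u v : Set ((Ω → ℝ) × ℝ)) :=
    (continuous_const.prodMk continuous_id).continuousAt.preimage_mem_nhds
      (isOpen_interior.mem_nhds h)
  obtain ⟨t, ht, hVt⟩ := (hnhds.and_frequently (frequently_gt_nhds V)).exists
  obtain ⟨μ, hμ, hp0, htμ⟩ := interior_subset ht
  exact (hVt.trans_le htμ).not_ge (hV ⟨μ, ⟨hμ, hp0⟩, rfl⟩)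

theorem exists_pos_supporting_payoffHypograph [Finite A] [Nonempty A] {p0 : Ω → ℝ} {V : ℝ}
    (hp0 : ∀ ω, 0 < p0 ω)
    (hV : IsGreatest (payoff u '' {μ ∈ obedientCone v | barycenter μ = p0}) V) :
    ∃ (g : Ω → ℝ) (c : ℝ), 0 < c ∧
      (∀ q ∈ payoffHypograph u v, g ⬝ᵥ q.1 + c * q.2 ≤ 0) ∧ g ⬝ᵥ p0 + c * V = 0 := by
  classical
  obtain ⟨f, hf0, hf⟩ := geometric_hahn_banach_of_nonempty_interior_point
    (payoffHypograph u v).convex (mk_notMem_interior_payoffHypograph hV.2)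
    interior_payoffHypograph_nonempty
  have hV_mem : (p0, V) ∈ payoffHypograph u v := by
    obtain ⟨μ, ⟨hμ, rfl⟩, rfl⟩ := hV.1
    exact mk_mem_payoffHypograph hμ
  have hfV := (payoffHypograph u v).map_eq_zero_of_forall_le f hV_mem hf
  set g : Ω → ℝ := fun ω => f (Pi.single ω 1, 0)
  set c : ℝ := f (0, 1)
  have hf_eq : ∀ q, f q = g ⬝ᵥ q.1 + c * q.2 :=
    LinearMap.apply_eq_dotProduct_add_mul (f : (Ω → ℝ) × ℝ →ₗ[ℝ] ℝ)
  have hle : ∀ q ∈ payoffHypograph u v, g ⬝ᵥ q.1 + c * q.2 ≤ 0 := fun q hq =>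
    hf_eq q ▸ hfV ▸ hf q hq
  have hgc : g ⬝ᵥ p0 + c * V = 0 := hf_eq (p0, V) ▸ hfV
  refine ⟨g, c, ?_, hle, hgc⟩
  have hc : 0 ≤ c := by
    have := hle _ (mk_mem_payoffHypograph_of_le hV_mem (sub_one_lt V).le)
    dsimp only at this
    linarith
  refine hc.lt_of_ne' fun hc0 => hf0 ?_
  -- A vertical hyperplane has `g ≤ 0` at the vertices and `g ⬝ᵥ p0 = 0`, so `g = 0` as `p0 > 0`.
  obtain ⟨w, hw⟩ := exists_dotProduct_mem_payoffHypograph (u := u) (v := v)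
  have hg_nonpos : ∀ ω, g ω ≤ 0 := fun ω => by
    have := hle _ (hw _ (Pi.single_nonneg.2 zero_le_one) : (Pi.single ω 1, _) ∈ _)
    rwa [hc0, dotProduct_single, mul_one, zero_mul, add_zero] at this
  rw [hc0, zero_mul, add_zero] at hgc
  have hg := eq_zero_of_nonpos_of_dotProduct_eq_zero hg_nonpos hp0 hgc
  refine ContinuousLinearMap.ext fun q => ?_
  rw [hf_eq, hg, hc0]
  simp

theorem exists_majorizes_dotProduct_eq [Finite A] [Nonempty A] {p0 : Ω → ℝ} {V : ℝ}
    (hp0 : ∀ ω, 0 < p0 ω)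
    (hV : IsGreatest (payoff u '' {μ ∈ obedientCone v | barycenter μ = p0}) V) :
    ∃ lam, Majorizes lam u v ∧ lam ⬝ᵥ p0 = V := by
  obtain ⟨g, c, hc, hle, hgc⟩ := exists_pos_supporting_payoffHypograph hp0 hV
  refine ⟨-c⁻¹ • g, fun x hx => ?_, ?_⟩
  · have := hle _ (mk_mem_payoffHypograph (u := u) (single_mem_obedientCone hx zero_le_one))
    simp only [barycenter_single, payoff_single, one_smul, one_mul] at this
    rw [smul_dotProduct, smul_eq_mul]
    field_simp
    linarith
  · rw [smul_dotProduct, smul_eq_mul]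
    field_simp
    linarith

end BayesianPersuasion

open BayesianPersuasion

/-- Kamenica–Gentzkow concavification characterization: a Bayes-plausible
obedient signal is sender-optimal iff there is a hyperplane `λ` that coincides
with the sender's payoff on the support and lies weakly above the sender's
indirect utility everywhere on the simplex. -/
theorem stmt_4 {Ω A : Type} [Fintype Ω] [Fintype A] [Nonempty A]
    (p0 : Ω → ℝ) (hp0 : p0 ∈ stdSimplex ℝ Ω) (hfull : ∀ ω, 0 < p0 ω)
    (u v : A → Ω → ℝ)
    (IsSignal : ((A × (Ω → ℝ)) →₀ ℝ) → Prop)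
    (hSig : ∀ π : (A × (Ω → ℝ)) →₀ ℝ, IsSignal π ↔
      ((∀ x, 0 ≤ π x) ∧ (∑ x ∈ π.support, π x = 1) ∧
       (∀ ω, ∑ x ∈ π.support, π x * x.2 ω = p0 ω) ∧
       (∀ x ∈ π.support, x.2 ∈ stdSimplex ℝ Ω ∧
          ∀ b : A, ∑ ω, v b ω * x.2 ω ≤ ∑ ω, v x.1 ω * x.2 ω)))
    (val : ((A × (Ω → ℝ)) →₀ ℝ) → ℝ)
    (hval : ∀ π : (A × (Ω → ℝ)) →₀ ℝ,
      val π = ∑ x ∈ π.support, π x * ∑ ω, u x.1 ω * x.2 ω)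
    (π : (A × (Ω → ℝ)) →₀ ℝ) (hπ : IsSignal π) :
    (∀ π', IsSignal π' → val π' ≤ val π) ↔
      ∃ lam : Ω → ℝ,
        (∀ x ∈ π.support, ∑ ω, lam ω * x.2 ω = ∑ ω, u x.1 ω * x.2 ω) ∧
        (∀ p ∈ stdSimplex ℝ Ω, ∀ a : A,
          (∀ b : A, ∑ ω, v b ω * p ω ≤ ∑ ω, v a ω * p ω) →
            ∑ ω, u a ω * p ω ≤ ∑ ω, lam ω * p ω) := by
  have hsig : ∀ μ, IsSignal μ ↔ μ ∈ obedientCone v ∧ barycenter μ = p0 := fun μ =>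
    (hSig μ).trans (isObedientSignal_iff hp0.2)
  have hval' : ∀ μ, val μ = payoff u μ := fun μ => (hval μ).trans (payoff_apply μ).symm
  obtain ⟨hπ, hπp0⟩ := (hsig π).1 hπ
  constructor
  · intro hopt
    have hV : IsGreatest (payoff u '' {μ ∈ obedientCone v | barycenter μ = p0}) (payoff u π) :=
      ⟨⟨π, ⟨hπ, hπp0⟩, rfl⟩, by
        rintro _ ⟨μ, hμ, rfl⟩
        rw [← hval', ← hval']
        exact hopt μ ((hsig μ).2 hμ)⟩
    obtain ⟨lam, hlam, hlamV⟩ := exists_majorizes_dotProduct_eq hfull hV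
    exact ⟨lam, (payoff_eq_dotProduct_barycenter_iff hlam hπ).1 (by rw [hπp0, hlamV]),
      fun p hp a ha => hlam (a, p) ⟨hp, ha⟩⟩
  · rintro ⟨lam, hsupp, hdom⟩ μ hμ
    obtain ⟨hμ, hμp0⟩ := (hsig μ).1 hμ
    have hlam : Majorizes lam u v := fun x hx => hdom x.2 hx.1 x.1 hx.2
    rw [hval', hval']
    calc payoff u μ ≤ lam ⬝ᵥ barycenter μ := payoff_le_dotProduct_barycenter hlam hμ
      _ = lam ⬝ᵥ barycenter π := by rw [hμp0, hπp0]
      _ = payoff u π := ((payoff_eq_dotProduct_barycenter_iff hlam hπ).2 hsupp).symm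
end

section
/- (Single-menu falsification, sufficiency direction) Let Ω be finite, p0 a full-support prior, A a finite menu with receiver payoffs v, and σ a state-dependent stochastic choice with revealed recommendation distribution π_σ satisfying NIAS. Suppose (1) π_σ is informative (not the point mass at p0), and (2) there exists an action a* that is receiver-optimal at p0 and a posterior p with (a*,p) in the support of π_σ such that p + ε(p − p0) ∈ C_{A,a*} for some ε > 0. Then for NO sender utility u: A × Ω → ℝ is π_σ an optimal signal that strictly benefits from persuasion (i.e., π_σ is inconsistent with nontrivial Bayesian persuasion). -/
open Finset

/-!
An optimal signal that strictly benefits the sender puts no weight on the prior: dropping that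
weight and renormalizing keeps Bayes plausibility and obedience, and strictly raises the value,
because the sender's payoff at the prior is below the signal's value. Condition (2) lets one
replace the weight `w` on `(a*, p)` by the payoff-equivalent split `w / (1 + ε)` on
`(a*, p + ε (p - p₀))` and `w ε / (1 + ε)` on `(a*, p₀)`, which is then removed.
-/

namespace Finsupp

variable {X M : Type*} [AddCommGroup M] [Module ℝ M]

lemma sum_support_mul_eq_linearCombination (μ : X →₀ ℝ) (f : X → ℝ) :
    ∑ x ∈ μ.support, μ x * f x = linearCombination ℝ f μ := by
  simp [linearCombination_apply, Finsupp.sum]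

lemma linearCombination_smul_erase_add_single (f : X → M) (μ : X →₀ ℝ) (y y' : X) (c s : ℝ) :
    linearCombination ℝ f (s • (μ.erase y + single y' c)) =
      s • (linearCombination ℝ f μ - μ y • f y + c • f y') := by
  have hμ := congrArg (linearCombination ℝ f) (erase_add_single y μ)
  rw [map_add, linearCombination_single] at hμ
  rw [map_smul, map_add, linearCombination_single, ← hμ, add_sub_cancel_right]

end Finsupp

lemma smul_extrapolate_eq {E : Type*} [AddCommGroup E] [Module ℝ E] (p p0 : E) {w ε : ℝ}
    (hε : 1 + ε ≠ 0) :
    (w / (1 + ε)) • (p + ε • (p - p0)) = w • p - (w * ε / (1 + ε)) • p0 := by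
  match_scalars <;> field_simp

lemma sum_weights_eq_one {X Ω : Type*} [Fintype Ω] (μ : X →₀ ℝ) (post : X → Ω → ℝ)
    (p0 : Ω → ℝ) (hbayes : ∀ ω, ∑ x ∈ μ.support, μ x * post x ω = p0 ω)
    (hpost : ∀ x ∈ μ.support, ∑ ω, post x ω = 1) (hp0 : ∑ ω, p0 ω = 1) :
    ∑ x ∈ μ.support, μ x = 1 := by
  calc ∑ x ∈ μ.support, μ x = ∑ x ∈ μ.support, μ x * ∑ ω, post x ω :=
        sum_congr rfl fun x hx => by rw [hpost x hx, mul_one]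
    _ = ∑ ω, ∑ x ∈ μ.support, μ x * post x ω := by simp only [mul_sum]; exact sum_comm
    _ = 1 := by simp only [hbayes, hp0]

section PushAway

variable {X M : Type*} [AddCommGroup M] [Module ℝ M]

/-- If `f y' = f y + ε (f y - m)`, the mass `w` of `y` splits, keeping the `f`-mean, as
`w / (1 + ε)` at `y'` and `w ε / (1 + ε)` at a point of value `m`; that second share is dropped
and the rest renormalized. -/
noncomputable def pushAway (μ : X →₀ ℝ) (y y' : X) (ε : ℝ) : X →₀ ℝ :=
  (1 - μ y * ε / (1 + ε))⁻¹ • (μ.erase y + Finsupp.single y' (μ y / (1 + ε)))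

variable (μ : X →₀ ℝ) (y y' : X) {ε : ℝ}

lemma pushAway_nonneg (hμ : ∀ x, 0 ≤ μ x) (hε : 0 ≤ ε) (hle : μ y * ε / (1 + ε) ≤ 1) (x : X) :
    0 ≤ pushAway μ y y' ε x := by
  classical
  have herase : 0 ≤ μ.erase y x := by
    rw [Finsupp.erase_apply]; split_ifs <;> simp [hμ]
  have hsingle : 0 ≤ Finsupp.single y' (μ y / (1 + ε)) x := by
    rw [Finsupp.single_apply]; split_ifs
    exacts [div_nonneg (hμ y) (by linarith), le_rfl]
  simp only [pushAway, Finsupp.smul_apply, Finsupp.add_apply, smul_eq_mul]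
  exact mul_nonneg (inv_nonneg.2 (sub_nonneg.2 hle)) (add_nonneg herase hsingle)

lemma mem_support_pushAway [DecidableEq X] {x : X} (hx : x ∈ (pushAway μ y y' ε).support) :
    x ∈ μ.support ∨ x = y' := by
  have hsub := (Finsupp.support_smul.trans Finsupp.support_add) hx
  rw [mem_union, Finsupp.support_erase] at hsub
  rcases hsub with h | h
  · exact .inl (mem_of_mem_erase h)
  · exact .inr (mem_singleton.1 (Finsupp.support_single_subset h))

lemma linearCombination_pushAway (f : X → M) (m : M) (hε : 1 + ε ≠ 0)
    (hfy' : f y' = f y + ε • (f y - m)) :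
    Finsupp.linearCombination ℝ f (pushAway μ y y' ε) =
      (1 - μ y * ε / (1 + ε))⁻¹ • (Finsupp.linearCombination ℝ f μ - (μ y * ε / (1 + ε)) • m) := by
  rw [pushAway, Finsupp.linearCombination_smul_erase_add_single, hfy',
    smul_extrapolate_eq _ _ hε]
  congr 1
  abel

lemma linearCombination_pushAway_of_eq (f : X → M) {m : M} (hε : 1 + ε ≠ 0)
    (hfy' : f y' = f y + ε • (f y - m)) (hlam : μ y * ε / (1 + ε) ≠ 1)
    (hμ : Finsupp.linearCombination ℝ f μ = m) :
    Finsupp.linearCombination ℝ f (pushAway μ y y' ε) = m := by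
  rw [linearCombination_pushAway μ y y' f m hε hfy', hμ]
  nth_rewrite 1 [← one_smul ℝ m]
  rw [← sub_smul, inv_smul_smul₀ (sub_ne_zero.2 hlam.symm)]

end PushAway

theorem stmt_6_general {Ω A : Type} [Fintype Ω]
    (p0 : Ω → ℝ)
    (v : A → Ω → ℝ)
    (C : A → Set (Ω → ℝ))
    (hC : ∀ a, C a = {q : Ω → ℝ | q ∈ stdSimplex ℝ Ω ∧
        ∀ b : A, ∑ ω, v b ω * q ω ≤ ∑ ω, v a ω * q ω})
    (π : (A × (Ω → ℝ)) →₀ ℝ)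
    (hpos : ∀ x, 0 ≤ π x)
    (hbayes : ∀ ω, ∑ x ∈ π.support, π x * x.2 ω = p0 ω)
    (hNIAS : ∀ x ∈ π.support, x.2 ∈ C x.1)
    (hsplit : ∃ (astar : A) (p : Ω → ℝ) (ε : ℝ), 0 < ε ∧ p0 ∈ C astar ∧
      (astar, p) ∈ π.support ∧ (fun ω => p ω + ε * (p ω - p0 ω)) ∈ C astar) :
    ∀ u : A → Ω → ℝ,
      ¬ ((∀ π' : (A × (Ω → ℝ)) →₀ ℝ,
            ((∀ x, 0 ≤ π' x) ∧ (∀ ω, ∑ x ∈ π'.support, π' x * x.2 ω = p0 ω) ∧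
             (∀ x ∈ π'.support, x.2 ∈ C x.1)) →
            ∑ x ∈ π'.support, π' x * ∑ ω, u x.1 ω * x.2 ω ≤
              ∑ x ∈ π.support, π x * ∑ ω, u x.1 ω * x.2 ω) ∧
         (∀ a : A, p0 ∈ C a →
            ∑ ω, u a ω * p0 ω <
              ∑ x ∈ π.support, π x * ∑ ω, u x.1 ω * x.2 ω)) := by
  classical
  rintro u ⟨hopt, hstrict⟩
  obtain ⟨astar, p, ε, hε, hp0C, hmem, hp'C⟩ := hsplit
  have hsum_one : ∀ a, ∀ q ∈ C a, ∑ ω, q ω = 1 := fun a q hq => by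
    rw [hC] at hq; exact hq.1.2
  set y : A × (Ω → ℝ) := (astar, p)
  set y' : A × (Ω → ℝ) := (astar, p + ε • (p - p0))
  set ν := pushAway π y y' ε
  set lam := π y * ε / (1 + ε)
  set V := ∑ x ∈ π.support, π x * ∑ ω, u x.1 ω * x.2 ω
  have hw : 0 < π y := (hpos y).lt_of_ne' (Finsupp.mem_support_iff.1 hmem)
  have hw1 : π y ≤ 1 :=
    sum_weights_eq_one π Prod.snd p0 hbayes (fun x hx => hsum_one _ _ (hNIAS x hx))
      (hsum_one _ _ hp0C) ▸ single_le_sum (fun x _ => hpos x) hmem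
  have hlam : 0 < lam := by positivity
  have hlam1 : lam < 1 := by rw [div_lt_one (by linarith)]; nlinarith
  have hν_bayes : ∀ ω, ∑ x ∈ ν.support, ν x * x.2 ω = p0 ω := fun ω => by
    rw [Finsupp.sum_support_mul_eq_linearCombination, linearCombination_pushAway_of_eq π y y' _
      (by linarith) rfl hlam1.ne (by rw [← Finsupp.sum_support_mul_eq_linearCombination, hbayes])]
  have hν_nias : ∀ x ∈ ν.support, x.2 ∈ C x.1 := fun x hx =>
    (mem_support_pushAway π y y' hx).elim (hNIAS x) fun h => by subst h; exact hp'C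
  have hν_value : ∑ x ∈ ν.support, ν x * ∑ ω, u x.1 ω * x.2 ω =
      (1 - lam)⁻¹ * (V - lam * ∑ ω, u astar ω * p0 ω) := by
    simp only [Finsupp.sum_support_mul_eq_linearCombination]
    refine linearCombination_pushAway π y y' _ _ (by linarith) ?_
    show u astar ⬝ᵥ (p + ε • (p - p0)) = u astar ⬝ᵥ p + ε * (u astar ⬝ᵥ p - u astar ⬝ᵥ p0)
    rw [dotProduct_add, dotProduct_smul, dotProduct_sub, smul_eq_mul]
  have hle := hopt ν ⟨pushAway_nonneg π y y' hpos hε.le hlam1.le, hν_bayes, hν_nias⟩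
  rw [hν_value, inv_mul_le_iff₀ (by linarith)] at hle
  nlinarith [hstrict astar hp0C]

/-- Single-menu falsification: if the revealed recommendation distribution is
informative and some revealed posterior of a receiver-optimal-at-the-prior
action can be pushed strictly away from the prior while staying in its
optimality region, then no sender utility makes it an optimal signal that
strictly benefits from persuasion. -/
theorem stmt_6 {Ω A : Type} [Fintype Ω] [Fintype A] [Nonempty A]
    (p0 : Ω → ℝ) (hp0 : p0 ∈ stdSimplex ℝ Ω) (hfull : ∀ ω, 0 < p0 ω)
    (v : A → Ω → ℝ)
    (C : A → Set (Ω → ℝ))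
    (hC : ∀ a, C a = {q : Ω → ℝ | q ∈ stdSimplex ℝ Ω ∧
        ∀ b : A, ∑ ω, v b ω * q ω ≤ ∑ ω, v a ω * q ω})
    (π : (A × (Ω → ℝ)) →₀ ℝ)
    (hpos : ∀ x, 0 ≤ π x)
    (hbayes : ∀ ω, ∑ x ∈ π.support, π x * x.2 ω = p0 ω)
    (hNIAS : ∀ x ∈ π.support, x.2 ∈ C x.1)
    (hinf : ∃ x ∈ π.support, x.2 ≠ p0)
    (hsplit : ∃ (astar : A) (p : Ω → ℝ) (ε : ℝ), 0 < ε ∧ p0 ∈ C astar ∧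
      (astar, p) ∈ π.support ∧ (fun ω => p ω + ε * (p ω - p0 ω)) ∈ C astar) :
    ∀ u : A → Ω → ℝ,
      ¬ ((∀ π' : (A × (Ω → ℝ)) →₀ ℝ,
            ((∀ x, 0 ≤ π' x) ∧ (∀ ω, ∑ x ∈ π'.support, π' x * x.2 ω = p0 ω) ∧
             (∀ x ∈ π'.support, x.2 ∈ C x.1)) →
            ∑ x ∈ π'.support, π' x * ∑ ω, u x.1 ω * x.2 ω ≤
              ∑ x ∈ π.support, π x * ∑ ω, u x.1 ω * x.2 ω) ∧
         (∀ a : A, p0 ∈ C a →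
            ∑ ω, u a ω * p0 ω <
              ∑ x ∈ π.support, π x * ∑ ω, u x.1 ω * x.2 ω)) :=
  stmt_6_general p0 v C hC π hpos hbayes hNIAS hsplit
end

section
/- Let F0 and F be CDFs on [0,1] with finite support, and define I(z) = ∫_0^z [F0(s) − F(s)] ds. If I(z) ≥ 0 for all z in the support Z of F0 and I(1) = 0, then I(z) ≥ 0 for all z ∈ [0,1]. -/
/-!
Let `a ≤ z ≤ b` be the nearest points of `Z0 ∪ {0}` below `z` and of `Z0 ∪ {1}` above `z`; `I` is
nonnegative at both. On `[a, b)` the CDF `F0` is constant, so the integrand `F0 - F` is antitone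
there. If it is nonnegative at `z`, it is nonnegative on `[a, z]` and `I z ≥ I a`; otherwise it is
negative on `(z, b)` and `I z ≥ I b`.
-/

open Finset intervalIntegral MeasureTheory

theorem Finset.exists_le_forall_le_of_le {α : Type*} [LinearOrder α] {S : Finset α}
    {P : α → Prop} {d z : α} (hdz : d ≤ z) (hd : P d) (hS : ∀ t ∈ S, P t) :
    ∃ a ≤ z, P a ∧ ∀ t ∈ S, t ≤ z → t ≤ a := by
  obtain ⟨a, ha, hmax⟩ :=
    exists_max_image ((insert d S).filter (· ≤ z)) id ⟨d, by simp [hdz]⟩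
  simp only [mem_filter, mem_insert, id] at ha hmax
  refine ⟨a, ha.2, ha.1.elim (· ▸ hd) (hS a), fun t ht htz => hmax t ⟨Or.inr ht, htz⟩⟩

theorem Finset.exists_ge_forall_ge_of_ge {α : Type*} [LinearOrder α] {S : Finset α}
    {P : α → Prop} {d z : α} (hzd : z ≤ d) (hd : P d) (hS : ∀ t ∈ S, P t) :
    ∃ b ≥ z, P b ∧ ∀ t ∈ S, z ≤ t → b ≤ t :=
  Finset.exists_le_forall_le_of_le (α := αᵒᵈ) hzd hd hS

theorem monotone_sum_filter_le {α M : Type*} [LinearOrder α] [AddCommMonoid M] [PartialOrder M]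
    [IsOrderedAddMonoid M] {Z : Finset α} {f : α → M} (hf : ∀ s ∈ Z, 0 ≤ f s) :
    Monotone fun z => ∑ s ∈ Z.filter (· ≤ z), f s := fun _ _ huv =>
  sum_le_sum_of_subset_of_nonneg (monotone_filter_right Z fun _ _ h => h.trans huv)
    fun t ht _ => hf t (mem_filter.mp ht).1

theorem sum_filter_le_eq_of_forall_notMem_Ioc {α M : Type*} [LinearOrder α] [AddCommMonoid M]
    {Z : Finset α} {f : α → M} {a s : α} (has : a ≤ s) (hZ : ∀ t ∈ Z, t ∉ Set.Ioc a s) :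
    ∑ t ∈ Z.filter (· ≤ s), f t = ∑ t ∈ Z.filter (· ≤ a), f t := by
  refine sum_congr (filter_congr fun t ht => ⟨fun hts => ?_, fun hta => hta.trans has⟩)
    fun _ _ => rfl
  by_contra hta
  exact hZ t ht ⟨lt_of_not_ge hta, hts⟩

theorem AntitoneOn.integral_nonneg_or_integral_nonpos {g : ℝ → ℝ} {a z b : ℝ}
    (hg : AntitoneOn g (Set.Ico a b)) (haz : a ≤ z) (hzb : z ≤ b) :
    0 ≤ ∫ s in a..z, g s ∨ ∫ s in z..b, g s ≤ 0 := by
  rcases hzb.eq_or_lt with rfl | hzb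
  · simp
  have hz : z ∈ Set.Ico a b := ⟨haz, hzb⟩
  rcases le_or_gt 0 (g z) with hgz | hgz
  · exact .inl <| integral_nonneg haz fun s hs =>
      hgz.trans (hg ⟨hs.1, hs.2.trans_lt hzb⟩ hz hs.2)
  · refine .inr ?_
    rw [integral_of_le hzb.le, integral_Ioc_eq_integral_Ioo]
    exact setIntegral_nonpos measurableSet_Ioo fun s hs =>
      (hg hz ⟨haz.trans hs.1.le, hs.2⟩ hs.1.le).trans hgz.le

theorem stmt_13_general
    (Z0 Z : Finset ℝ) (f0 f : ℝ → ℝ)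
    (hf0 : ∀ s ∈ Z0, 0 < f0 s) (hf : ∀ s ∈ Z, 0 ≤ f s)
    (F0 F : ℝ → ℝ)
    (hF0 : ∀ z, F0 z = ∑ s ∈ Z0.filter (· ≤ z), f0 s)
    (hF : ∀ z, F z = ∑ s ∈ Z.filter (· ≤ z), f s)
    (I : ℝ → ℝ)
    (hI : ∀ z, I z = ∫ s in (0:ℝ)..z, (F0 s - F s))
    (hpos : ∀ z ∈ Z0, 0 ≤ I z)
    (h1 : I 1 = 0) :
    ∀ z ∈ Set.Icc (0:ℝ) 1, 0 ≤ I z := by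
  rintro z ⟨hz0, hz1⟩
  have hF0_mono : Monotone F0 := by
    simpa only [← funext hF0] using monotone_sum_filter_le fun s hs => (hf0 s hs).le
  have hF_mono : Monotone F := by simpa only [← funext hF] using monotone_sum_filter_le hf
  have hint (u v : ℝ) : IntervalIntegrable (fun s => F0 s - F s) volume u v :=
    hF0_mono.intervalIntegrable.sub hF_mono.intervalIntegrable
  obtain ⟨a, haz, haI, ha⟩ := Z0.exists_le_forall_le_of_le hz0 (by simp [hI]) hpos
  obtain ⟨b, hzb, hbI, hb⟩ := Z0.exists_ge_forall_ge_of_ge hz1 h1.ge hpos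
  have hF0_const : ∀ s ∈ Set.Ico a b, F0 s = F0 a := fun s hs => by
    rw [hF0, hF0]
    refine sum_filter_le_eq_of_forall_notMem_Ioc hs.1 fun t ht hts => ?_
    rcases le_total t z with htz | hzt
    · exact (ha t ht htz).not_gt hts.1
    · exact (hb t ht hzt).not_gt (hts.2.trans_lt hs.2)
  have hanti : AntitoneOn (fun s => F0 s - F s) (Set.Ico a b) := fun s hs t ht hst => by
    simp only [hF0_const s hs, hF0_const t ht]
    linarith [hF_mono hst]
  rcases hanti.integral_nonneg_or_integral_nonpos haz hzb with h | h
  · linarith [integral_add_adjacent_intervals (hint 0 a) (hint a z), hI a, hI z]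
  · linarith [integral_add_adjacent_intervals (hint 0 z) (hint z b), hI z, hI b]

/-- Checking the mean-preserving-contraction integral condition at the finitely
many support points of the prior suffices: if `I(z) ≥ 0` on the support of `F0`
and `I(1) = 0`, then `I(z) ≥ 0` on all of `[0,1]`. -/
theorem stmt_13
    (Z0 Z : Finset ℝ) (f0 f : ℝ → ℝ)
    (hZ0 : (↑Z0 : Set ℝ) ⊆ Set.Icc (0:ℝ) 1) (hZ : (↑Z : Set ℝ) ⊆ Set.Icc (0:ℝ) 1)
    (hf0 : ∀ s ∈ Z0, 0 < f0 s) (hf : ∀ s ∈ Z, 0 ≤ f s)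
    (hs0 : ∑ s ∈ Z0, f0 s = 1) (hs : ∑ s ∈ Z, f s = 1)
    (F0 F : ℝ → ℝ)
    (hF0 : ∀ z, F0 z = ∑ s ∈ Z0.filter (· ≤ z), f0 s)
    (hF : ∀ z, F z = ∑ s ∈ Z.filter (· ≤ z), f s)
    (I : ℝ → ℝ)
    (hI : ∀ z, I z = ∫ s in (0:ℝ)..z, (F0 s - F s))
    (hpos : ∀ z ∈ Z0, 0 ≤ I z)
    (h1 : I 1 = 0) :
    ∀ z ∈ Set.Icc (0:ℝ) 1, 0 ≤ I z :=
  stmt_13_general Z0 Z f0 f hf0 hf F0 F hF0 hF I hI hpos h1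
end

section
/- (Discretization of posterior means) Let F0 be a finitely supported prior on [0,1] with support Z, and F ∈ I_{F0} a mean-preserving contraction of F0 which places mass m > 0 at a point z* ∉ (Z ∪ {z1, z2}) with z1 < z* < z2 and no point of Z ∪ {z1,z2} strictly between z1 and z2, where z1, z2 are given. Let α = (z*−z1)/(z2−z1) and let F̂ be obtained from F by moving the mass m at z* to mass (1−α)m at z1 and αm at z2. Then F̂ is still a mean-preserving contraction of F0, and F̂ has the same mean as F. -/
/-!
For atoms in `[0, 1]`, `∫₀ᶻ F = ∑ₛ (z - s)⁺ · mass(s)`. Since `z* = (1 - α) z₁ + α z₂`, the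
ramp `s ↦ (z - s)⁺` is affine on `[z₁, z₂]` whenever `z ∉ (z₁, z₂)`, so splitting the atom at
`z*` changes neither `∫₀ᶻ F` for such `z` nor the mean. For `z ∈ (z₁, z₂)`, `∫₀ᶻ F₀` is affine
(no atoms of `F₀` there) and `∫₀ᶻ F̂` is convex, so `∫₀ᶻ (F₀ - F̂)` is concave on `[z₁, z₂]` and
nonnegative because it is at the endpoints.
-/

open Finset intervalIntegral MeasureTheory

lemma max_zero_convex_comb_le {a b u v : ℝ} (ha : 0 ≤ a) (hb : 0 ≤ b) :
    max (a * u + b * v) 0 ≤ a * max u 0 + b * max v 0 := by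
  refine max_le ?_ (by positivity)
  nlinarith [le_max_left u 0, le_max_left v 0]

lemma max_zero_convex_comb_eq {a b u v : ℝ} (ha : 0 ≤ a) (hb : 0 ≤ b) (huv : 0 ≤ u * v) :
    max (a * u + b * v) 0 = a * max u 0 + b * max v 0 := by
  rcases le_total 0 u with hu | hu <;> rcases le_total 0 v with hv | hv
  · rw [max_eq_left hu, max_eq_left hv, max_eq_left (by positivity)]
  · obtain rfl | rfl : u = 0 ∨ v = 0 := mul_eq_zero.1 (by nlinarith)
    · simp [max_eq_right hv, max_eq_right (mul_nonpos_of_nonneg_of_nonpos hb hv)]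
    · simp [max_eq_left hu, max_eq_left (mul_nonneg ha hu)]
  · obtain rfl | rfl : u = 0 ∨ v = 0 := mul_eq_zero.1 (by nlinarith)
    · simp [max_eq_left hv, max_eq_left (mul_nonneg hb hv)]
    · simp [max_eq_right hu, max_eq_right (mul_nonpos_of_nonneg_of_nonpos ha hu)]
  · rw [max_eq_right hu, max_eq_right hv, max_eq_right (by nlinarith)]
    ring

lemma sub_mul_sub_nonneg_of_notMem_Ioo {x y s : ℝ} (hxy : x ≤ y) (hs : s ∉ Set.Ioo x y) :
    0 ≤ (x - s) * (y - s) := by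
  rcases le_or_gt s x with h | h
  · nlinarith
  · have : y ≤ s := not_lt.1 fun h' => hs ⟨h, h'⟩
    nlinarith

def integratedCDF (S : Finset ℝ) (c : ℝ → ℝ) (z : ℝ) : ℝ :=
  ∑ s ∈ S, max (z - s) 0 * c s

lemma intervalIntegrable_ite_le (s c a b : ℝ) :
    IntervalIntegrable (fun t => if s ≤ t then c else 0) volume a b :=
  intervalIntegrable_iff.2 <|
    (integrableOn_const (C := c) measure_Ioc_lt_top.ne).indicator (t := Set.Ici s) measurableSet_Ici

lemma intervalIntegrable_sum_ite_le (S : Finset ℝ) (c : ℝ → ℝ) (a b : ℝ) :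
    IntervalIntegrable (fun t => ∑ s ∈ S, if s ≤ t then c s else 0) volume a b := by
  simpa only [Finset.sum_fn] using
    IntervalIntegrable.sum S fun s _ => intervalIntegrable_ite_le s (c s) a b

lemma integral_ite_le {s z a : ℝ} (hs : a ≤ s) (hz : a ≤ z) (c : ℝ) :
    ∫ t in a..z, (if s ≤ t then c else 0) = max (z - s) 0 * c := by
  have hae : (Set.Ici s).indicator (fun _ => c) =ᵐ[volume] (Set.Ioi s).indicator fun _ => c :=
    indicator_ae_eq_of_ae_eq_set Ioi_ae_eq_Ici.symm
  rw [integral_congr_ae (g := (Set.Ioi s).indicator fun _ => c)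
      (by filter_upwards [hae] with t ht _ using ht),
    integral_of_le hz, setIntegral_indicator measurableSet_Ioi, Set.Ioc_inter_Ioi,
    max_eq_right hs, setIntegral_const, Real.volume_real_Ioc, smul_eq_mul]

lemma integral_sum_ite_le {S : Finset ℝ} {a z : ℝ} (hS : ∀ s ∈ S, a ≤ s) (hz : a ≤ z)
    (c : ℝ → ℝ) :
    ∫ t in a..z, (∑ s ∈ S, if s ≤ t then c s else 0) = integratedCDF S c z := by
  rw [integral_finsetSum fun s _ => intervalIntegrable_ite_le s (c s) a z]
  exact sum_congr rfl fun s hs => integral_ite_le (hS s hs) hz (c s)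

lemma integral_sub_sum_filter_le {S T : Finset ℝ} {a z : ℝ} (hS : ∀ s ∈ S, a ≤ s)
    (hT : ∀ s ∈ T, a ≤ s) (hz : a ≤ z) (c d : ℝ → ℝ) :
    ∫ t in a..z, (∑ s ∈ S.filter (· ≤ t), c s - ∑ s ∈ T.filter (· ≤ t), d s)
      = integratedCDF S c z - integratedCDF T d z := by
  simp only [sum_filter]
  rw [intervalIntegral.integral_sub (intervalIntegrable_sum_ite_le S c a z)
    (intervalIntegrable_sum_ite_le T d a z), integral_sum_ite_le hS hz, integral_sum_ite_le hT hz]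

lemma integratedCDF_convex_comb_le {S : Finset ℝ} {c : ℝ → ℝ} (hc : ∀ s ∈ S, 0 ≤ c s)
    {a b : ℝ} (ha : 0 ≤ a) (hb : 0 ≤ b) (hab : a + b = 1) (x y : ℝ) :
    integratedCDF S c (a * x + b * y)
      ≤ a * integratedCDF S c x + b * integratedCDF S c y := by
  simp only [integratedCDF, mul_sum, ← sum_add_distrib]
  refine sum_le_sum fun s hs => ?_
  have h := max_zero_convex_comb_le (u := x - s) (v := y - s) ha hb
  rw [show a * (x - s) + b * (y - s) = a * x + b * y - s by linear_combination -s * hab] at h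
  nlinarith [hc s hs]

lemma integratedCDF_convex_comb_eq {S : Finset ℝ} {x y : ℝ} (hxy : x ≤ y)
    (hS : ∀ s ∈ S, s ∉ Set.Ioo x y) (c : ℝ → ℝ)
    {a b : ℝ} (ha : 0 ≤ a) (hb : 0 ≤ b) (hab : a + b = 1) :
    integratedCDF S c (a * x + b * y)
      = a * integratedCDF S c x + b * integratedCDF S c y := by
  simp only [integratedCDF, mul_sum, ← sum_add_distrib]
  refine sum_congr rfl fun s hs => ?_
  have h := max_zero_convex_comb_eq ha hb (sub_mul_sub_nonneg_of_notMem_Ioo hxy (hS s hs))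
  rw [show a * (x - s) + b * (y - s) = a * x + b * y - s by linear_combination -s * hab] at h
  rw [h]
  ring

lemma integratedCDF_sub_nonneg_of_mem_Icc {S T : Finset ℝ} {c d : ℝ → ℝ} {x y z : ℝ}
    (hS : ∀ s ∈ S, s ∉ Set.Ioo x y) (hd : ∀ s ∈ T, 0 ≤ d s)
    (hx : 0 ≤ integratedCDF S c x - integratedCDF T d x)
    (hy : 0 ≤ integratedCDF S c y - integratedCDF T d y) (hz : z ∈ Set.Icc x y) :
    0 ≤ integratedCDF S c z - integratedCDF T d z := by
  have hxy : x ≤ y := hz.1.trans hz.2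
  obtain ⟨a, b, ha, hb, hab, rfl⟩ := (segment_eq_Icc hxy).symm ▸ hz
  simp only [smul_eq_mul] at *
  rw [integratedCDF_convex_comb_eq hxy hS c ha hb hab]
  nlinarith [integratedCDF_convex_comb_le hd ha hb hab x y]

lemma convex_comb_sub_div_sub {x y z : ℝ} (hxz : x < z) (hzy : z < y) :
    0 ≤ (z - x) / (y - x) ∧ (z - x) / (y - x) ≤ 1 ∧
      z = (1 - (z - x) / (y - x)) * x + (z - x) / (y - x) * y := by
  have hyx : 0 < y - x := by linarith
  refine ⟨div_nonneg (by linarith) hyx.le, (div_le_one hyx).2 (by linarith), ?_⟩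
  field_simp
  ring

noncomputable def splitAtom (f : ℝ → ℝ) (z x y α : ℝ) (s : ℝ) : ℝ :=
  if s = z then 0 else if s = x then f x + (1 - α) * f z else if s = y then f y + α * f z else f s

section splitAtom

variable {f : ℝ → ℝ} {x y z α : ℝ}

lemma splitAtom_eq (hxz : x ≠ z) (hyz : y ≠ z) (hxy : x ≠ y) (s : ℝ) :
    splitAtom f z x y α s = f s + (if s = x then (1 - α) * f z else 0)
      + (if s = y then α * f z else 0) - (if s = z then f z else 0) := by
  unfold splitAtom
  split_ifs <;> subst_vars <;> first | ring1 | simp_all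

lemma splitAtom_nonneg (hf : ∀ s, 0 ≤ f s) (hα0 : 0 ≤ α) (hα1 : α ≤ 1) (s : ℝ) :
    0 ≤ splitAtom f z x y α s := by
  have := hf z
  unfold splitAtom
  split_ifs
  exacts [le_rfl, by nlinarith [hf x], by nlinarith [hf y], hf s]

lemma sum_mul_splitAtom {W : Finset ℝ} (hzW : z ∈ W) (hfW : ∀ s, s ∉ W → f s = 0)
    (hxz : x ≠ z) (hyz : y ≠ z) (hxy : x ≠ y) (φ : ℝ → ℝ) :
    ∑ s ∈ W ∪ {x, y}, φ s * splitAtom f z x y α s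
      = ∑ s ∈ W, φ s * f s + f z * ((1 - α) * φ x + α * φ y - φ z) := by
  have hW : ∑ s ∈ W ∪ {x, y}, φ s * f s = ∑ s ∈ W, φ s * f s :=
    (sum_subset subset_union_left fun s _ hs => by rw [hfW s hs, mul_zero]).symm
  simp only [splitAtom_eq hxz hyz hxy, mul_add, mul_sub, mul_ite, mul_zero, sum_add_distrib,
    sum_sub_distrib, sum_ite_eq', mem_union, mem_insert, mem_singleton, hzW, true_or, or_true,
    if_true, hW]
  ring

lemma integratedCDF_splitAtom_of_notMem_Ioo {W : Finset ℝ} (hzW : z ∈ W)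
    (hfW : ∀ s, s ∉ W → f s = 0) (hxz : x < z) (hzy : z < y) (hα0 : 0 ≤ α) (hα1 : α ≤ 1)
    (hz : z = (1 - α) * x + α * y) {w : ℝ} (hw : w ∉ Set.Ioo x y) :
    integratedCDF (W ∪ {x, y}) (splitAtom f z x y α) w = integratedCDF W f w := by
  have hsgn : 0 ≤ (w - x) * (w - y) := by
    nlinarith [sub_mul_sub_nonneg_of_notMem_Ioo (hxz.trans hzy).le hw]
  have h := max_zero_convex_comb_eq (sub_nonneg.2 hα1) hα0 hsgn
  rw [show (1 - α) * (w - x) + α * (w - y) = w - z by rw [hz]; ring] at h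
  rw [integratedCDF, integratedCDF, sum_mul_splitAtom hzW hfW hxz.ne hzy.ne' (hxz.trans hzy).ne,
    h]
  ring

end splitAtom

theorem stmt_14_general
    (Z W : Finset ℝ) (f0 f : ℝ → ℝ)
    (hZ : (↑Z : Set ℝ) ⊆ Set.Icc (0:ℝ) 1) (hW : (↑W : Set ℝ) ⊆ Set.Icc (0:ℝ) 1)
    (hf : ∀ s ∈ W, 0 ≤ f s)
    (hfW : ∀ s, s ∉ W → f s = 0)
    (z1 z2 zstar m : ℝ)
    (hz1 : z1 ∈ Set.Icc (0:ℝ) 1) (hz2 : z2 ∈ Set.Icc (0:ℝ) 1)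
    (hlt1 : z1 < zstar) (hlt2 : zstar < z2)
    (hzstarW : zstar ∈ W) (hmass : f zstar = m)
    (hgap : ∀ z ∈ Z, z ∉ Set.Ioo z1 z2)
    (F0 F : ℝ → ℝ)
    (hF0 : ∀ z, F0 z = ∑ s ∈ Z.filter (· ≤ z), f0 s)
    (hF : ∀ z, F z = ∑ s ∈ W.filter (· ≤ z), f s)
    (hMPC : ∀ z ∈ Set.Icc (0:ℝ) 1, 0 ≤ ∫ s in (0:ℝ)..z, (F0 s - F s))
    (hMPC1 : (∫ s in (0:ℝ)..1, (F0 s - F s)) = 0)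
    (α : ℝ) (hα : α = (zstar - z1) / (z2 - z1))
    (fhat : ℝ → ℝ)
    (hfhat : ∀ s, fhat s = if s = zstar then 0 else
        if s = z1 then f z1 + (1 - α) * m else
        if s = z2 then f z2 + α * m else f s)
    (What : Finset ℝ) (hWhat : What = W ∪ {z1, z2})
    (Fhat : ℝ → ℝ)
    (hFhat : ∀ z, Fhat z = ∑ s ∈ What.filter (· ≤ z), fhat s) :
    (∀ z ∈ Set.Icc (0:ℝ) 1, 0 ≤ ∫ s in (0:ℝ)..z, (F0 s - Fhat s)) ∧
    ((∫ s in (0:ℝ)..1, (F0 s - Fhat s)) = 0) ∧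
    (∑ s ∈ What, s * fhat s = ∑ s ∈ W, s * f s) := by
  subst hmass hWhat
  obtain rfl : fhat = splitAtom f zstar z1 z2 α := funext hfhat
  obtain ⟨hα0, hα1, hzα⟩ : 0 ≤ α ∧ α ≤ 1 ∧ zstar = (1 - α) * z1 + α * z2 :=
    hα ▸ convex_comb_sub_div_sub hlt1 hlt2
  have hf_nonneg (s : ℝ) : 0 ≤ f s := if h : s ∈ W then hf s h else (hfW s h).ge
  have hW0 : ∀ s ∈ W, 0 ≤ s := fun s hs => (hW hs).1
  have hWhat0 : ∀ s ∈ W ∪ {z1, z2}, 0 ≤ s := by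
    simp only [mem_union, mem_insert, mem_singleton]
    rintro s (hs | rfl | rfl)
    exacts [hW0 s hs, hz1.1, hz2.1]
  have hint {U : Finset ℝ} {e G : ℝ → ℝ} (hU : ∀ s ∈ U, 0 ≤ s)
      (hG : ∀ z, G z = ∑ s ∈ U.filter (· ≤ z), e s) {z : ℝ} (hz : 0 ≤ z) :
      ∫ s in (0:ℝ)..z, (F0 s - G s) = integratedCDF Z f0 z - integratedCDF U e z := by
    simp only [hF0, hG]
    exact integral_sub_sum_filter_le (fun s hs => (hZ hs).1) hU hz f0 e
  have hout {z : ℝ} (hz : z ∉ Set.Ioo z1 z2) :=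
    integratedCDF_splitAtom_of_notMem_Ioo hzstarW hfW hlt1 hlt2 hα0 hα1 hzα hz
  have hMPCout (z : ℝ) (hz : z ∈ Set.Icc (0:ℝ) 1) (hz' : z ∉ Set.Ioo z1 z2) :
      0 ≤ integratedCDF Z f0 z - integratedCDF (W ∪ {z1, z2}) (splitAtom f zstar z1 z2 α) z := by
    rw [hout hz', ← hint hW0 hF hz.1]
    exact hMPC z hz
  refine ⟨fun z hz => ?_, ?_, ?_⟩
  · rw [hint hWhat0 hFhat hz.1]
    by_cases hmid : z ∈ Set.Ioo z1 z2
    · exact integratedCDF_sub_nonneg_of_mem_Icc hgap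
        (fun s _ => splitAtom_nonneg hf_nonneg hα0 hα1 s) (hMPCout z1 hz1 (by simp)) (hMPCout z2 hz2 (by simp)) (Set.Ioo_subset_Icc_self hmid)
    · exact hMPCout z hz hmid
  · rw [hint hWhat0 hFhat zero_le_one, hout fun h => h.2.not_ge hz2.2, ← hint hW0 hF zero_le_one,
      hMPC1]
  · rw [sum_mul_splitAtom hzstarW hfW hlt1.ne hlt2.ne' (hlt1.trans hlt2).ne (fun s => s)]
    linear_combination (-f zstar) * hzα

/-- Discretization of posterior means: moving the mass `m` that `F` places at
`z* ∉ Z` to the bracketing points `z1 < z* < z2` (with no point of `Z` strictly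
between them), in the mean-preserving proportions `1−α, α`, yields a
distribution that is still a mean-preserving contraction of the prior `F0` and
has the same mean as `F`. -/
theorem stmt_14
    (Z W : Finset ℝ) (f0 f : ℝ → ℝ)
    (hZ : (↑Z : Set ℝ) ⊆ Set.Icc (0:ℝ) 1) (hW : (↑W : Set ℝ) ⊆ Set.Icc (0:ℝ) 1)
    (hf0 : ∀ s ∈ Z, 0 ≤ f0 s) (hf : ∀ s ∈ W, 0 ≤ f s)
    (hs0 : ∑ s ∈ Z, f0 s = 1) (hs : ∑ s ∈ W, f s = 1)
    (hfW : ∀ s, s ∉ W → f s = 0)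
    (z1 z2 zstar m : ℝ)
    (hz1 : z1 ∈ Set.Icc (0:ℝ) 1) (hz2 : z2 ∈ Set.Icc (0:ℝ) 1)
    (hlt1 : z1 < zstar) (hlt2 : zstar < z2)
    (hzstarW : zstar ∈ W) (hmass : f zstar = m) (hm : 0 < m)
    (hnotZ : zstar ∉ Z) (hgap : ∀ z ∈ Z, z ∉ Set.Ioo z1 z2)
    (F0 F : ℝ → ℝ)
    (hF0 : ∀ z, F0 z = ∑ s ∈ Z.filter (· ≤ z), f0 s)
    (hF : ∀ z, F z = ∑ s ∈ W.filter (· ≤ z), f s)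
    (hMPC : ∀ z ∈ Set.Icc (0:ℝ) 1, 0 ≤ ∫ s in (0:ℝ)..z, (F0 s - F s))
    (hMPC1 : (∫ s in (0:ℝ)..1, (F0 s - F s)) = 0)
    (α : ℝ) (hα : α = (zstar - z1) / (z2 - z1))
    (fhat : ℝ → ℝ)
    (hfhat : ∀ s, fhat s = if s = zstar then 0 else
        if s = z1 then f z1 + (1 - α) * m else
        if s = z2 then f z2 + α * m else f s)
    (What : Finset ℝ) (hWhat : What = W ∪ {z1, z2})
    (Fhat : ℝ → ℝ)
    (hFhat : ∀ z, Fhat z = ∑ s ∈ What.filter (· ≤ z), fhat s) :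
    (∀ z ∈ Set.Icc (0:ℝ) 1, 0 ≤ ∫ s in (0:ℝ)..z, (F0 s - Fhat s)) ∧
    ((∫ s in (0:ℝ)..1, (F0 s - Fhat s)) = 0) ∧
    (∑ s ∈ What, s * fhat s = ∑ s ∈ W, s * f s) :=
  stmt_14_general Z W f0 f hZ hW hf hfW z1 z2 zstar m hz1 hz2 hlt1 hlt2 hzstarW hmass hgap F0 F hF0
    hF hMPC hMPC1 α hα fhat hfhat What hWhat Fhat hFhat
end

section
/- (Necessity of NBPS, core perturbation argument) Let menus A_1,…,A_n have optimal obedient Bayes-plausible signals π_1,…,π_n (for a common sender utility u), each with supporting hyperplanes λ_1,…,λ_n in the sense that λ_i·p = Σ_ω u(a,ω)p(ω) for (a,p) ∈ supp(π_i) and λ_i·p ≥ Σ_ω u(a*(p),ω)p(ω) for all p. Suppose alternative obedient signals π̃_1,…,π̃_n and weights β_1,…,β_n ≥ 0 satisfy: (i) each π̃_i is Bayes-plausible for the common prior p0, and (ii) Σ_i β_i Σ_p p·π_i(a,p) = Σ_i β_i Σ_p p·π̃_i(a,p) for every action a. Then Σ_i β_i [sender value of π̃_i] = Σ_i β_i [sender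 value of π_i], and hence if for some menu j the signal π̃_j places positive probability on a pair (a, p0) with λ_j·p0 > Σ_ω u(a,ω)p0(ω), there exists a menu k and a pair (a',p') in the support of π̃_k with Σ_ω u(a',ω)p'(ω) > λ_k·p', contradicting optimality of π_k. -/
/-!
Sender value is linear in the state-weighted action masses `∑_p p(ω) π(a, p)`, so the balance
condition forces equal weighted sender values. Bayes plausibility turns the hyperplane `λᵢ`
into the value `λᵢ · p0` of every signal lying on or below it: the optimal signals attain it,
and an alternative signal lying weakly below `λᵢ` everywhere and strictly at a point `(a, p0)`
of positive mass falls strictly short. Were no alternative above its hyperplane, the weighted values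
of the alternatives would then be strictly smaller than those of the optimal signals.
-/

open Finset

section SenderValue

variable {ι Ω X R : Type*} [Fintype Ω]

theorem sum_mul_sum_mul_comm [CommSemiring R] (s : Finset ι) (f : ι → R) (l : Ω → R)
    (q : ι → Ω → R) :
    ∑ i ∈ s, f i * ∑ ω, l ω * q i ω = ∑ ω, l ω * ∑ i ∈ s, f i * q i ω := by
  simp_rw [mul_sum]
  rw [sum_comm]
  exact sum_congr rfl fun _ _ => sum_congr rfl fun _ _ => mul_left_comm _ _ _

variable [Fintype X] [DecidableEq X]

theorem sum_mul_value_eq_sum_actionMass [CommSemiring R] (s : Finset (X × (Ω → R)))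
    (f : X × (Ω → R) → R) (u : X → Ω → R) :
    ∑ x ∈ s, f x * ∑ ω, u x.1 ω * x.2 ω =
      ∑ aω : X × Ω, u aω.1 aω.2 * ∑ x ∈ s.filter (·.1 = aω.1), f x * x.2 aω.2 := by
  rw [← sum_fiberwise s Prod.fst, Fintype.sum_prod_type]
  refine sum_congr rfl fun a _ => ?_
  refine (sum_congr rfl fun x hx => ?_).trans (sum_mul_sum_mul_comm _ f (u a) Prod.snd)
  rw [(mem_filter.mp hx).2]

theorem weighted_value_eq_of_actionMass_eq [Fintype ι] [CommSemiring R] (β : ι → R)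
    (u : X → Ω → R) (σ τ : ι → (X × (Ω → R)) →₀ R)
    (hbal : ∀ (a : X) (ω : Ω),
      ∑ i, β i * ∑ x ∈ (σ i).support.filter (·.1 = a), σ i x * x.2 ω =
      ∑ i, β i * ∑ x ∈ (τ i).support.filter (·.1 = a), τ i x * x.2 ω) :
    ∑ i, β i * ∑ x ∈ (σ i).support, σ i x * ∑ ω, u x.1 ω * x.2 ω =
      ∑ i, β i * ∑ x ∈ (τ i).support, τ i x * ∑ ω, u x.1 ω * x.2 ω := by
  simp_rw [sum_mul_value_eq_sum_actionMass]
  rw [sum_mul_sum_mul_comm (l := fun aω : X × Ω => u aω.1 aω.2),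
    sum_mul_sum_mul_comm (l := fun aω : X × Ω => u aω.1 aω.2)]
  exact sum_congr rfl fun aω _ => by rw [hbal]

end SenderValue

section Hyperplane

variable {Ω X : Type*} [Fintype Ω] {p0 : Ω → ℝ} (u : X → Ω → ℝ) (lam : Ω → ℝ)
  {σ : (X × (Ω → ℝ)) →₀ ℝ}

theorem hyperplane_sub_value_eq_sum_gap (hbayes : ∀ ω, ∑ x ∈ σ.support, σ x * x.2 ω = p0 ω) :
    ∑ ω, lam ω * p0 ω - ∑ x ∈ σ.support, σ x * ∑ ω, u x.1 ω * x.2 ω =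
      ∑ x ∈ σ.support, σ x * (∑ ω, lam ω * x.2 ω - ∑ ω, u x.1 ω * x.2 ω) := by
  simp_rw [mul_sub, sum_sub_distrib, sum_mul_sum_mul_comm, hbayes]

variable {u lam}

theorem value_eq_of_support_on_hyperplane
    (hbayes : ∀ ω, ∑ x ∈ σ.support, σ x * x.2 ω = p0 ω)
    (hon : ∀ x ∈ σ.support, ∑ ω, lam ω * x.2 ω = ∑ ω, u x.1 ω * x.2 ω) :
    ∑ x ∈ σ.support, σ x * ∑ ω, u x.1 ω * x.2 ω = ∑ ω, lam ω * p0 ω := by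
  refine (sub_eq_zero.mp ?_).symm
  rw [hyperplane_sub_value_eq_sum_gap u lam hbayes]
  exact sum_eq_zero fun x hx => by rw [hon x hx, sub_self, mul_zero]

theorem value_le_of_support_below_hyperplane (hpos : ∀ x, 0 ≤ σ x)
    (hbayes : ∀ ω, ∑ x ∈ σ.support, σ x * x.2 ω = p0 ω)
    (hbelow : ∀ x ∈ σ.support, ∑ ω, u x.1 ω * x.2 ω ≤ ∑ ω, lam ω * x.2 ω) :
    ∑ x ∈ σ.support, σ x * ∑ ω, u x.1 ω * x.2 ω ≤ ∑ ω, lam ω * p0 ω := by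
  refine sub_nonneg.mp ?_
  rw [hyperplane_sub_value_eq_sum_gap u lam hbayes]
  exact sum_nonneg fun x hx => mul_nonneg (hpos x) (sub_nonneg.mpr (hbelow x hx))

theorem value_lt_of_support_below_hyperplane (hpos : ∀ x, 0 ≤ σ x)
    (hbayes : ∀ ω, ∑ x ∈ σ.support, σ x * x.2 ω = p0 ω)
    (hbelow : ∀ x ∈ σ.support, ∑ ω, u x.1 ω * x.2 ω ≤ ∑ ω, lam ω * x.2 ω)
    {a : X} (hmass : 0 < σ (a, p0)) (hloss : ∑ ω, u a ω * p0 ω < ∑ ω, lam ω * p0 ω) :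
    ∑ x ∈ σ.support, σ x * ∑ ω, u x.1 ω * x.2 ω < ∑ ω, lam ω * p0 ω := by
  refine sub_pos.mp ?_
  rw [hyperplane_sub_value_eq_sum_gap u lam hbayes]
  exact sum_pos' (fun x hx => mul_nonneg (hpos x) (sub_nonneg.mpr (hbelow x hx)))
    ⟨(a, p0), Finsupp.mem_support_iff.mpr hmass.ne', mul_pos hmass (sub_pos.mpr hloss)⟩

end Hyperplane

theorem stmt_17_general {Ω X : Type} [Fintype Ω] [Fintype X] [DecidableEq X] {n : ℕ}
    (p0 : Ω → ℝ)
    (u : X → Ω → ℝ)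
    (π πt : Fin n → ((X × (Ω → ℝ)) →₀ ℝ))
    (β : Fin n → ℝ) (hβ : ∀ i, 0 ≤ β i)
    (lam : Fin n → Ω → ℝ)
    -- the original signals: nonnegative, Bayes-plausible, obedient
    (hπbayes : ∀ i ω, ∑ x ∈ (π i).support, π i x * x.2 ω = p0 ω)
    -- supporting hyperplanes for the optimal signals
    (hlam1 : ∀ i, ∀ x ∈ (π i).support,
      ∑ ω, lam i ω * x.2 ω = ∑ ω, u x.1 ω * x.2 ω)
    -- the alternative signals: nonnegative, Bayes-plausible, obedient
    (hπtpos : ∀ i x, 0 ≤ πt i x)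
    (hπtbayes : ∀ i ω, ∑ x ∈ (πt i).support, πt i x * x.2 ω = p0 ω)
    -- (ii) the weighted state-dependent action probabilities balance
    (hbal : ∀ (a : X) (ω : Ω),
      ∑ i, β i * ∑ x ∈ (π i).support.filter (fun x => x.1 = a), π i x * x.2 ω =
      ∑ i, β i * ∑ x ∈ (πt i).support.filter (fun x => x.1 = a), πt i x * x.2 ω) :
    (∑ i, β i * ∑ x ∈ (πt i).support, πt i x * ∑ ω, u x.1 ω * x.2 ω =
      ∑ i, β i * ∑ x ∈ (π i).support, π i x * ∑ ω, u x.1 ω * x.2 ω) ∧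
    ((∃ (j : Fin n) (a : X), 0 < β j ∧ 0 < πt j (a, p0) ∧
        ∑ ω, u a ω * p0 ω < ∑ ω, lam j ω * p0 ω) →
      ∃ k : Fin n, ∃ x ∈ (πt k).support,
        ∑ ω, lam k ω * x.2 ω < ∑ ω, u x.1 ω * x.2 ω) := by
  have hvalue := weighted_value_eq_of_actionMass_eq β u π πt hbal
  refine ⟨hvalue.symm, ?_⟩
  rintro ⟨j, a, hβj, hmass, hloss⟩
  by_contra! hbelow
  have hlt : ∑ i, β i * ∑ x ∈ (πt i).support, πt i x * ∑ ω, u x.1 ω * x.2 ω <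
      ∑ i, β i * ∑ ω, lam i ω * p0 ω :=
    sum_lt_sum (fun i _ => mul_le_mul_of_nonneg_left
        (value_le_of_support_below_hyperplane (hπtpos i) (hπtbayes i) (hbelow i)) (hβ i))
      ⟨j, mem_univ j, mul_lt_mul_of_pos_left
        (value_lt_of_support_below_hyperplane (hπtpos j) (hπtbayes j) (hbelow j) hmass hloss)
        hβj⟩
  have hopt : ∑ i, β i * ∑ x ∈ (π i).support, π i x * ∑ ω, u x.1 ω * x.2 ω =
      ∑ i, β i * ∑ ω, lam i ω * p0 ω :=
    sum_congr rfl fun i _ => by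
      rw [value_eq_of_support_on_hyperplane (hπbayes i) (hlam1 i)]
  linarith

/-- Necessity of NBPS, core perturbation argument: balanced Bayes-plausible
obedient alternatives preserve the weighted sender value; hence a strict loss
at the prior in some menu must be offset by a strict gain above some menu's
supporting hyperplane, contradicting optimality. -/
theorem stmt_17 {Ω X : Type} [Fintype Ω] [Fintype X] [DecidableEq X] {n : ℕ}
    (p0 : Ω → ℝ) (hp0 : p0 ∈ stdSimplex ℝ Ω)
    (u v : X → Ω → ℝ)
    (A : Fin n → Finset X)
    (π πt : Fin n → ((X × (Ω → ℝ)) →₀ ℝ))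
    (β : Fin n → ℝ) (hβ : ∀ i, 0 ≤ β i)
    (lam : Fin n → Ω → ℝ)
    -- the original signals: nonnegative, Bayes-plausible, obedient
    (hπpos : ∀ i x, 0 ≤ π i x)
    (hπbayes : ∀ i ω, ∑ x ∈ (π i).support, π i x * x.2 ω = p0 ω)
    (hπobed : ∀ i, ∀ x ∈ (π i).support, x.1 ∈ A i ∧ x.2 ∈ stdSimplex ℝ Ω ∧
      ∀ b ∈ A i, ∑ ω, v b ω * x.2 ω ≤ ∑ ω, v x.1 ω * x.2 ω)
    -- supporting hyperplanes for the optimal signals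
    (hlam1 : ∀ i, ∀ x ∈ (π i).support,
      ∑ ω, lam i ω * x.2 ω = ∑ ω, u x.1 ω * x.2 ω)
    (hlam2 : ∀ i, ∀ p ∈ stdSimplex ℝ Ω, ∀ a ∈ A i,
      (∀ b ∈ A i, ∑ ω, v b ω * p ω ≤ ∑ ω, v a ω * p ω) →
        ∑ ω, u a ω * p ω ≤ ∑ ω, lam i ω * p ω)
    -- the alternative signals: nonnegative, Bayes-plausible, obedient
    (hπtpos : ∀ i x, 0 ≤ πt i x)
    (hπtbayes : ∀ i ω, ∑ x ∈ (πt i).support, πt i x * x.2 ω = p0 ω)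
    (hπtobed : ∀ i, ∀ x ∈ (πt i).support, x.1 ∈ A i ∧ x.2 ∈ stdSimplex ℝ Ω ∧
      ∀ b ∈ A i, ∑ ω, v b ω * x.2 ω ≤ ∑ ω, v x.1 ω * x.2 ω)
    -- (ii) the weighted state-dependent action probabilities balance
    (hbal : ∀ (a : X) (ω : Ω),
      ∑ i, β i * ∑ x ∈ (π i).support.filter (fun x => x.1 = a), π i x * x.2 ω =
      ∑ i, β i * ∑ x ∈ (πt i).support.filter (fun x => x.1 = a), πt i x * x.2 ω) :
    (∑ i, β i * ∑ x ∈ (πt i).support, πt i x * ∑ ω, u x.1 ω * x.2 ω =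
      ∑ i, β i * ∑ x ∈ (π i).support, π i x * ∑ ω, u x.1 ω * x.2 ω) ∧
    ((∃ (j : Fin n) (a : X), 0 < β j ∧ 0 < πt j (a, p0) ∧
        ∑ ω, u a ω * p0 ω < ∑ ω, lam j ω * p0 ω) →
      ∃ k : Fin n, ∃ x ∈ (πt k).support,
        ∑ ω, lam k ω * x.2 ω < ∑ ω, u x.1 ω * x.2 ω) :=
  stmt_17_general p0 u π πt β hβ lam hπbayes hlam1 hπtpos hπtbayes hbal
end
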